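/- Second-order boundedness of the population R-loss in the nuisance direction: for any nuisance g = (m, e) and intermediate nuisance g̃, with θ bounded coordinatewise by M, |D_g D_g L(θ, g̃)[g - g0, g - g0]| ≤ 2(1 + d·M²)·‖g - g0‖²_{L2}, where ‖g - g0‖²_{L2} = E[‖g(W) - g0(W)‖²]. -/

import Mathlib

/-!
Along the line `g̃ + t (g - g₀)` the residual is affine in `t`, `A + t C` with
`C = -(m - m₀)(W) + ⟨(e - e₀)(W), θ(W)⟩`, so the loss is the quadratic `t ↦ E[(A + t C)²]` and its
second derivative is `2 E[C²]`; Cauchy–Schwarz in `ℝ^{1+d}` gives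
`C² ≤ (1 + ‖θ‖²) ‖g - g₀‖² ≤ (1 + d M²) ‖g - g₀‖²`. The loss really is that quadratic as soon as
`(A + t C)²` is integrable for three values of `t`, by interpolation; otherwise the Bochner integral
is `0` for all `t ≠ 0` near `0`, and so is the second derivative.
-/

open MeasureTheory Filter Topology

theorem iteratedDeriv_two_quadratic (a b c x : ℝ) :
    iteratedDeriv 2 (fun t => a + t * b + t ^ 2 * c) x = 2 * c := by
  have h₁ : deriv (fun t : ℝ => a + t * b + t ^ 2 * c) = fun t => b + 2 * t * c := by
    funext t
    exact (((((hasDerivAt_id' t).mul_const b).const_add a).add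
      ((hasDerivAt_pow 2 t).mul_const c)).congr_deriv (by norm_num)).deriv
  rw [iteratedDeriv_succ, iteratedDeriv_one, h₁]
  refine HasDerivAt.deriv ?_
  convert (((hasDerivAt_id' x).const_mul 2).mul_const c).const_add b using 1
  ring

theorem deriv_eventuallyEq_zero_of_eventuallyEq_nhdsNE {𝕜 E : Type*} [NontriviallyNormedField 𝕜]
    [NormedAddCommGroup E] [NormedSpace 𝕜 E] {f : 𝕜 → E} {x : 𝕜} (h : f =ᶠ[𝓝[≠] x] 0) :
    deriv f =ᶠ[𝓝 x] 0 := by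
  have hpunct : ∀ᶠ y in 𝓝[≠] x, deriv f y = 0 := by
    filter_upwards [nhdsWithin_le_nhds (eventually_nhdsWithin_iff.mp h).eventually_nhds,
      self_mem_nhdsWithin] with y hy hyx
    have : f =ᶠ[𝓝 y] 0 := by
      filter_upwards [hy, isOpen_compl_singleton.mem_nhds hyx] with z hz hzx using hz hzx
    simpa using this.deriv_eq
  have hx : deriv f x = 0 := by
    by_cases hf : DifferentiableAt 𝕜 f x
    · have hfx : f x = 0 :=
        tendsto_nhds_unique (hf.continuousAt.tendsto.mono_left nhdsWithin_le_nhds)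
          (tendsto_const_nhds.congr' h.symm)
      have : f =ᶠ[𝓝 x] 0 := by
        rw [← nhdsNE_sup_pure, EventuallyEq, eventually_sup]
        exact ⟨h, hfx⟩
      simpa using this.deriv_eq
    · exact deriv_zero_of_not_differentiableAt hf
  rw [← nhdsNE_sup_pure, EventuallyEq, eventually_sup]
  exact ⟨hpunct, hx⟩

theorem sq_neg_add_sum_mul_le {ι : Type*} [Fintype ι] (a : ℝ) (u θ : ι → ℝ) {M : ℝ}
    (hθ : ∀ i, |θ i| ≤ M) :
    (-a + ∑ i, u i * θ i) ^ 2 ≤ (1 + Fintype.card ι * M ^ 2) * (a ^ 2 + ∑ i, u i ^ 2) := by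
  have hcs := Finset.sum_mul_sq_le_sq_mul_sq Finset.univ
    (fun i : Option ι => i.elim (-1) θ) (fun i => i.elim a u)
  simp only [Fintype.sum_option, Option.elim_none, Option.elim_some] at hcs
  have hθsq : ∑ i, θ i ^ 2 ≤ Fintype.card ι * M ^ 2 := by
    calc ∑ i, θ i ^ 2 ≤ ∑ _i : ι, M ^ 2 :=
          Finset.sum_le_sum fun i _ => sq_le_sq' (abs_le.mp (hθ i)).1 (abs_le.mp (hθ i)).2
      _ = Fintype.card ι * M ^ 2 := by simp
  have hu : 0 ≤ a ^ 2 + ∑ i, u i ^ 2 := by positivity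
  calc (-a + ∑ i, u i * θ i) ^ 2 ≤ (1 + ∑ i, θ i ^ 2) * (a ^ 2 + ∑ i, u i ^ 2) := by
        simpa [mul_comm] using hcs
    _ ≤ (1 + Fintype.card ι * M ^ 2) * (a ^ 2 + ∑ i, u i ^ 2) := by gcongr

section QuadraticIntegrand

variable {Ω : Type*} [MeasurableSpace Ω] {μ : Measure Ω} {A C : Ω → ℝ}

theorem integrable_coeffs_of_integrable_add_mul_sq {t₁ t₂ t₃ : ℝ} (h₁₂ : t₁ ≠ t₂) (h₁₃ : t₁ ≠ t₃)
    (h₂₃ : t₂ ≠ t₃) (hi : ∀ t ∈ ({t₁, t₂, t₃} : Finset ℝ),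
      Integrable (fun ω => (A ω + t * C ω) ^ 2) μ) :
    Integrable (fun ω => A ω ^ 2) μ ∧ Integrable (fun ω => A ω * C ω) μ ∧
      Integrable (fun ω => C ω ^ 2) μ := by
  have hcomb : ∀ α β γ : ℝ, Integrable (fun ω => α * (A ω + t₁ * C ω) ^ 2 +
      β * (A ω + t₂ * C ω) ^ 2 + γ * (A ω + t₃ * C ω) ^ 2) μ := fun α β γ =>
    (((hi t₁ (by simp)).const_mul α).add ((hi t₂ (by simp)).const_mul β)).add
      ((hi t₃ (by simp)).const_mul γ)
  -- Lagrange interpolation of the quadratic `t ↦ (A + t C)²` through `t₁, t₂, t₃`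
  refine ⟨(hcomb (t₂ * t₃ / ((t₁ - t₂) * (t₁ - t₃))) (t₁ * t₃ / ((t₂ - t₁) * (t₂ - t₃)))
      (t₁ * t₂ / ((t₃ - t₁) * (t₃ - t₂)))).congr (ae_of_all _ fun ω => ?_),
    (hcomb (-(t₂ + t₃) / (2 * ((t₁ - t₂) * (t₁ - t₃)))) (-(t₁ + t₃) / (2 * ((t₂ - t₁) * (t₂ - t₃))))
      (-(t₁ + t₂) / (2 * ((t₃ - t₁) * (t₃ - t₂))))).congr (ae_of_all _ fun ω => ?_),
    (hcomb (1 / ((t₁ - t₂) * (t₁ - t₃))) (1 / ((t₂ - t₁) * (t₂ - t₃)))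
      (1 / ((t₃ - t₁) * (t₃ - t₂)))).congr (ae_of_all _ fun ω => ?_)⟩ <;>
  · field_simp [sub_ne_zero.mpr h₁₂, sub_ne_zero.mpr h₁₃, sub_ne_zero.mpr h₂₃,
      sub_ne_zero.mpr h₁₂.symm, sub_ne_zero.mpr h₁₃.symm, sub_ne_zero.mpr h₂₃.symm]
    ring

theorem integral_add_mul_sq (hA : Integrable (fun ω => A ω ^ 2) μ)
    (hAC : Integrable (fun ω => A ω * C ω) μ) (hC : Integrable (fun ω => C ω ^ 2) μ) (t : ℝ) :
    ∫ ω, (A ω + t * C ω) ^ 2 ∂μ =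
      ∫ ω, A ω ^ 2 ∂μ + t * (2 * ∫ ω, A ω * C ω ∂μ) + t ^ 2 * ∫ ω, C ω ^ 2 ∂μ := by
  have hexpand : (fun ω => (A ω + t * C ω) ^ 2) =
      fun ω => A ω ^ 2 + (t * 2) * (A ω * C ω) + t ^ 2 * C ω ^ 2 := by
    funext ω
    ring
  have hlin : Integrable (fun ω => A ω ^ 2 + (t * 2) * (A ω * C ω)) μ := hA.add (hAC.const_mul _)
  rw [hexpand, integral_add hlin (hC.const_mul _), integral_add hA (hAC.const_mul _),
    integral_const_mul, integral_const_mul, mul_assoc]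

theorem abs_iteratedDeriv_two_integral_add_mul_sq_le (x : ℝ) :
    |iteratedDeriv 2 (fun t => ∫ ω, (A ω + t * C ω) ^ 2 ∂μ) x| ≤ 2 * ∫ ω, C ω ^ 2 ∂μ := by
  have hC : 0 ≤ ∫ ω, C ω ^ 2 ∂μ := integral_nonneg fun ω => sq_nonneg _
  rcases Set.finite_or_infinite {t | Integrable (fun ω => (A ω + t * C ω) ^ 2) μ} with hS | hS
  · -- off a finite set of `t` the integral takes its junk value `0`
    have hzero : (fun t => ∫ ω, (A ω + t * C ω) ^ 2 ∂μ) =ᶠ[𝓝[≠] x] 0 := by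
      filter_upwards [nhdsWithin_le_nhds ((hS.sdiff (t := {x})).isClosed.compl_mem_nhds
        (by simp)), self_mem_nhdsWithin] with t ht htx
      exact integral_undef fun hi => ht ⟨hi, htx⟩
    rw [iteratedDeriv_succ, iteratedDeriv_one,
      (deriv_eventuallyEq_zero_of_eventuallyEq_nhdsNE hzero).deriv_eq]
    simpa using hC
  · classical
    obtain ⟨s, hsS, hs⟩ := hS.exists_subset_card_eq 3
    obtain ⟨t₁, t₂, t₃, h₁₂, h₁₃, h₂₃, rfl⟩ := Finset.card_eq_three.mp hs
    obtain ⟨hA, hAC, hC'⟩ :=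
      integrable_coeffs_of_integrable_add_mul_sq h₁₂ h₁₃ h₂₃ fun t ht => hsS ht
    simp only [integral_add_mul_sq hA hAC hC', iteratedDeriv_two_quadratic]
    rw [abs_of_nonneg (by positivity)]

end QuadraticIntegrand

theorem stmt_9_general
    {Ω 𝓦 : Type*} [MeasurableSpace Ω] [MeasurableSpace 𝓦]
    (μ : Measure Ω) (d : ℕ) (M : ℝ)
    (W : Ω → 𝓦) (T : Ω → Fin d → ℝ) (Y : Ω → ℝ)
    (θ : 𝓦 → Fin d → ℝ)
    (m m0 mtilde : 𝓦 → ℝ) (e e0 etilde : 𝓦 → Fin d → ℝ)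
    (L : (𝓦 → ℝ) → (𝓦 → Fin d → ℝ) → ℝ)
    (hL : ∀ mm ee, L mm ee =
      ∫ ω, (Y ω - mm (W ω) - ∑ i, (T ω i - ee (W ω) i) * θ (W ω) i) ^ 2 ∂μ)
    (hθbdd : ∀ w i, |θ w i| ≤ M)
    (hgL2 : Integrable (fun ω =>
      (m (W ω) - m0 (W ω)) ^ 2 + ∑ i, (e (W ω) i - e0 (W ω) i) ^ 2) μ) :
    |iteratedDeriv 2 (fun t : ℝ =>
        L (fun w => mtilde w + t * (m w - m0 w))
          (fun w i => etilde w i + t * (e w i - e0 w i))) 0|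
      ≤ 2 * (1 + (d : ℝ) * M ^ 2) *
        ∫ ω, (m (W ω) - m0 (W ω)) ^ 2 + ∑ i, (e (W ω) i - e0 (W ω) i) ^ 2 ∂μ := by
  have hline : (fun t : ℝ => L (fun w => mtilde w + t * (m w - m0 w))
      (fun w i => etilde w i + t * (e w i - e0 w i))) = fun t => ∫ ω,
        ((Y ω - mtilde (W ω) - ∑ i, (T ω i - etilde (W ω) i) * θ (W ω) i) +
          t * (-(m (W ω) - m0 (W ω)) + ∑ i, (e (W ω) i - e0 (W ω) i) * θ (W ω) i)) ^ 2 ∂μ := by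
    funext t
    rw [hL]
    refine integral_congr_ae (ae_of_all _ fun ω => ?_)
    have hsum : ∑ i, (T ω i - (etilde (W ω) i + t * (e (W ω) i - e0 (W ω) i))) * θ (W ω) i =
        ∑ i, (T ω i - etilde (W ω) i) * θ (W ω) i -
          t * ∑ i, (e (W ω) i - e0 (W ω) i) * θ (W ω) i := by
      rw [Finset.mul_sum, ← Finset.sum_sub_distrib]
      exact Finset.sum_congr rfl fun i _ => by ring
    simp only [hsum]
    ring
  rw [hline, mul_assoc, ← integral_const_mul]
  refine (abs_iteratedDeriv_two_integral_add_mul_sq_le 0).trans ?_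
  gcongr 2 * ?_
  refine integral_mono_of_nonneg (ae_of_all _ fun ω => sq_nonneg _) (hgL2.const_mul _)
    (ae_of_all _ fun ω => ?_)
  simpa only [Fintype.card_fin] using
    sq_neg_add_sum_mul_le (m (W ω) - m0 (W ω)) (fun i => e (W ω) i - e0 (W ω) i) _ (hθbdd (W ω))

/-- Second-order boundedness of the population R-loss in the nuisance direction:
with `θ` coordinatewise bounded by `M`,
`|D_g D_g L(θ, g̃)[g - g0, g - g0]| ≤ 2 (1 + d M²) ‖g - g0‖²_{L²}`,
where the second directional derivative is `d²/dt² L(θ, g̃ + t (g - g0)) |_{t=0}` and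
`‖g - g0‖²_{L²} = E[‖g(W) - g0(W)‖²]` for the nuisance `g = (m, e)`. -/
theorem stmt_9
    {Ω 𝓦 : Type*} [MeasurableSpace Ω] [MeasurableSpace 𝓦]
    (μ : Measure Ω) [IsProbabilityMeasure μ] (d : ℕ) (M : ℝ)
    (W : Ω → 𝓦) (T : Ω → Fin d → ℝ) (Y : Ω → ℝ)
    (θ : 𝓦 → Fin d → ℝ)
    (m m0 mtilde : 𝓦 → ℝ) (e e0 etilde : 𝓦 → Fin d → ℝ)
    (L : (𝓦 → ℝ) → (𝓦 → Fin d → ℝ) → ℝ)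
    (hL : ∀ mm ee, L mm ee =
      ∫ ω, (Y ω - mm (W ω) - ∑ i, (T ω i - ee (W ω) i) * θ (W ω) i) ^ 2 ∂μ)
    (hWmeas : Measurable W) (hTmeas : Measurable T)
    (hθbdd : ∀ w i, |θ w i| ≤ M)
    (hYL2 : MemLp Y 2 μ) (hTL2 : ∀ i, MemLp (fun ω => T ω i) 2 μ)
    (hgL2 : Integrable (fun ω =>
      (m (W ω) - m0 (W ω)) ^ 2 + ∑ i, (e (W ω) i - e0 (W ω) i) ^ 2) μ) :
    |iteratedDeriv 2 (fun t : ℝ =>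
        L (fun w => mtilde w + t * (m w - m0 w))
          (fun w i => etilde w i + t * (e w i - e0 w i))) 0|
      ≤ 2 * (1 + (d : ℝ) * M ^ 2) *
        ∫ ω, (m (W ω) - m0 (W ω)) ^ 2 + ∑ i, (e (W ω) i - e0 (W ω) i) ^ 2 ∂μ :=
  stmt_9_general μ d M W T Y θ m m0 mtilde e e0 etilde L hL hθbdd hgL2
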